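/- For w a power of 2 and a partition λ of n with 2-quotient (𝛌₀, 𝛌₁), if the degree multiplicity formula ψ_𝛌(1) = C(w, |𝛌₀|) · χ_{𝛌₀}(1) · χ_{𝛌₁}(1) is odd and |𝛌₀| > |𝛌₁|, then 𝛌₁ = () and 𝛌₀ is a hook partition, i.e., 𝛌₀ = (r, 1^{w−r}) for some 1 ≤ r ≤ w. -/

import Mathlib

open Finset

/-- The hook length of the cell `(i, j)` of a Young diagram `μ`. -/
def hookLength (μ : YoungDiagram) (i j : ℕ) : ℕ :=
  (μ.rowLen i - j) + (μ.colLen j - i) - 1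

/-- The degree `χ_μ(1)` of the irreducible character of `S_{|μ|}` labeled by `μ`,
given by the hook length formula. -/
def charDegree (μ : YoungDiagram) : ℕ :=
  Nat.factorial μ.card / ∏ c ∈ μ.cells, hookLength μ c.1 c.2

/-!
`C(2^m, |λ₀|)` odd and `|λ₀| > |λ₁|` force `|λ₀| = 2^m` and `λ₁ = ∅`; the content is that
`χ_λ(1)` odd with `|λ| = 2^m` makes `λ` a hook.

Encode `λ` by a β-set `X ⊆ ℕ`; Frobenius' formula
`χ_λ(1) = |λ|! · ∏_{x > y in X} (x - y) / ∏_{x ∈ X} x!` agrees with the hook length formula,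
and is integral by a Vandermonde determinant argument. Split `X` by parity into the 2-quotient
`X₀ = {b | 2b ∈ X}`, `X₁ = {b | 2b + 1 ∈ X}` of sizes `n₀, n₁`. Then the 2-adic valuation of
`χ_X(1)` is that of `χ_{X₀}(1) · χ_{X₁}(1) · C(n₀ + n₁, n₀) · c! · C(|λ|, 2(n₀ + n₁))`, where
`c = |λ| - 2(n₀ + n₁)` is the size of the 2-core. If `|λ| = 2^(m+1)` and `χ_λ(1)` is odd, then
`c` is even with `c!` odd, so `c = 0`, and `C(2^m, n₀)` is odd, so one quotient is empty and
the other has size `2^m` and odd degree. Induction on `m` shows that `X` is the β-set of a hook.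
-/

open scoped Nat

local notation "ν₂" => padicValNat 2

theorem Nat.choose_two_succ (n : ℕ) : (n + 1).choose 2 = n + n.choose 2 := by
  rw [Nat.choose_succ_succ', Nat.choose_one_right]

theorem Nat.choose_two_eq_pred_add {n : ℕ} (hn : 0 < n) :
    n.choose 2 = (n - 1) + (n - 1).choose 2 := by
  rw [← Nat.choose_two_succ, Nat.sub_add_cancel hn]

theorem Nat.add_choose_two (a b : ℕ) : (a + b).choose 2 = a.choose 2 + b.choose 2 + a * b := by
  have : ((a + b).choose 2 : ℚ) = a.choose 2 + b.choose 2 + a * b := by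
    push_cast [Nat.cast_choose_two]; ring
  exact_mod_cast this

theorem two_mul_choose_two_add_choose_two (a b : ℕ) :
    (2 * (a.choose 2 + b.choose 2 + b) : ℚ) = 2 * a * b + (a - b) * (a - b - 1) := by
  push_cast [Nat.cast_choose_two]; ring

theorem mul_le_choose_two_add_choose_two (a b : ℕ) : a * b ≤ a.choose 2 + b.choose 2 + b := by
  have h := two_mul_choose_two_add_choose_two a b
  have : (0 : ℚ) ≤ (a - b) * (a - b - 1) := by
    rcases le_or_gt a b with hab | hab
    · have : (a : ℚ) ≤ b := by exact_mod_cast hab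
      nlinarith
    · have : (b : ℚ) + 1 ≤ a := by exact_mod_cast hab
      nlinarith
  exact_mod_cast (by push_cast; linarith : ((a * b : ℕ) : ℚ) ≤ (a.choose 2 + b.choose 2 + b : ℕ))

theorem eq_or_eq_add_one_of_choose_two_add_choose_two {a b : ℕ}
    (h : a.choose 2 + b.choose 2 + b = a * b) : b = a ∨ a = b + 1 := by
  have h2 := two_mul_choose_two_add_choose_two a b
  have h' : ((a.choose 2 + b.choose 2 + b : ℕ) : ℚ) = a * b := by exact_mod_cast h
  push_cast at h'
  rcases mul_eq_zero.mp (by linarith : ((a : ℚ) - b) * (a - b - 1) = 0) with h0 | h0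
  · left; exact_mod_cast (by linarith : (b : ℚ) = a)
  · right; exact_mod_cast (by linarith : (a : ℚ) = b + 1)

theorem eq_zero_or_eq_of_odd_choose_two_pow {m a : ℕ} (h : Odd ((2 ^ m).choose a)) :
    a = 0 ∨ a = 2 ^ m := by
  by_contra! ha
  exact Nat.not_even_iff_odd.mpr h
    (even_iff_two_dvd.mpr (Nat.prime_two.dvd_choose_pow ha.1 ha.2))

theorem Finset.sum_card_filter_lt_eq_choose_two {α : Type*} [LinearOrder α] (s : Finset α) :
    ∑ a ∈ s, #{b ∈ s | b < a} = (#s).choose 2 := by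
  induction s using Finset.induction_on_max with
  | empty => simp
  | insert a s ha ih =>
    have haS : a ∉ s := fun h => lt_irrefl a (ha a h)
    have hrest : ∀ x ∈ s, #{b ∈ insert a s | b < x} = #{b ∈ s | b < x} := fun x hx => by
      rw [filter_insert, if_neg (not_lt.mpr (ha x hx).le)]
    rw [sum_insert haS, sum_congr rfl hrest, ih, filter_insert, if_neg (lt_irrefl a),
      filter_true_of_mem ha, card_insert_of_notMem haS, Nat.choose_two_succ]

theorem padicValNat_finset_prod {p : ℕ} [Fact p.Prime] {ι : Type*} {s : Finset ι} {f : ι → ℕ}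
    (hf : ∀ i ∈ s, f i ≠ 0) : padicValNat p (∏ i ∈ s, f i) = ∑ i ∈ s, padicValNat p (f i) := by
  simp_rw [← Nat.factorization_def _ Fact.out, Nat.factorization_prod hf,
    Finsupp.finsetSum_apply]

theorem padicValNat_factorial_add (p : ℕ) [Fact p.Prime] (a b : ℕ) :
    padicValNat p (a + b)!
      = padicValNat p a ! + padicValNat p b ! + padicValNat p ((a + b).choose a) := by
  have hc : (a + b).choose b ≠ 0 := (Nat.choose_pos (Nat.le_add_left b a)).ne'
  rw [← Nat.add_choose_mul_factorial_mul_factorial,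
    padicValNat.mul (mul_ne_zero hc a.factorial_ne_zero) b.factorial_ne_zero,
    padicValNat.mul hc a.factorial_ne_zero, Nat.choose_symm_add]
  ring

theorem odd_iff_padicValNat_two_eq_zero {n : ℕ} (hn : n ≠ 0) : Odd n ↔ ν₂ n = 0 := by
  simp [padicValNat.eq_zero_iff, hn, Nat.odd_iff, Nat.dvd_iff_mod_eq_zero]

namespace BetaSet

/-- Listing `s` as `x₁ > ⋯ > x_k`, it is a β-set of the partition with parts `x_i - (k - i)`,
whose size is `size s`. -/
def size (s : Finset ℕ) : ℕ := ∑ x ∈ s, x - (#s).choose 2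

theorem choose_two_card_le_sum (s : Finset ℕ) : (#s).choose 2 ≤ ∑ x ∈ s, x := by
  induction s using Finset.induction_on_max with
  | empty => simp
  | insert a s ha ih =>
    have haS : a ∉ s := fun h => lt_irrefl a (ha a h)
    have hcard : #s ≤ a :=
      (card_le_card fun x hx => mem_range.mpr (ha x hx)).trans_eq (card_range a)
    rw [sum_insert haS, card_insert_of_notMem haS, Nat.choose_two_succ]
    omega

theorem size_add_choose_two (s : Finset ℕ) : size s + (#s).choose 2 = ∑ x ∈ s, x :=
  Nat.sub_add_cancel (choose_two_card_le_sum s)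

theorem add_one_le_size_add_card {s : Finset ℕ} {x : ℕ} (hx : x ∈ s) : x + 1 ≤ size s + #s := by
  have hsum : x + ∑ y ∈ s.erase x, y = ∑ y ∈ s, y := add_sum_erase s id hx
  have herase := choose_two_card_le_sum (s.erase x)
  rw [card_erase_of_mem hx] at herase
  have hsize := size_add_choose_two s
  have hk : 0 < #s := card_pos.mpr ⟨x, hx⟩
  rw [Nat.choose_two_eq_pred_add hk] at hsize
  omega

theorem eq_range_of_forall_lt_card {s : Finset ℕ} (h : ∀ x ∈ s, x < #s) : s = range #s :=
  eq_of_subset_of_card_le (fun x hx => mem_range.mpr (h x hx)) (card_range _).le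

theorem eq_range_of_size_eq_zero {s : Finset ℕ} (h : size s = 0) : s = range #s :=
  eq_range_of_forall_lt_card fun _ hx => by have := add_one_le_size_add_card hx; omega

/-- The β-sets with `k = #s` elements of the hooks `(M + 1 - k, 1 ^ (k - 1 - g))`. -/
def IsHook (s : Finset ℕ) : Prop :=
  ∃ M g, g < #s ∧ #s ≤ M ∧ s = insert M ((range #s).erase g)

theorem IsHook.eq_of_card_le {s : Finset ℕ} (h : IsHook s) {x y : ℕ} (hx : x ∈ s) (hy : y ∈ s)
    (hxs : #s ≤ x) (hys : #s ≤ y) : x = y := by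
  obtain ⟨M, g, -, -, hs⟩ := h
  rw [hs] at hx hy
  simp only [mem_insert, mem_erase, mem_range] at hx hy
  omega

theorem isHook_of_size_eq_one {s : Finset ℕ} (h : size s = 1) : IsHook s := by
  have hle : ∀ x ∈ s, x ≤ #s := fun _ hx => by have := add_one_le_size_add_card hx; omega
  obtain ⟨M, hM, hMk⟩ : ∃ M ∈ s, #s ≤ M := by
    by_contra! hlt
    rw [eq_range_of_forall_lt_card hlt] at h
    simp [size, sum_range_id, Nat.choose_two_right] at h
  obtain rfl : M = #s := le_antisymm (hle M hM) hMk
  have hk : 0 < #s := card_pos.mpr ⟨_, hM⟩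
  have hcard : #(s.erase #s) = #s - 1 := card_erase_of_mem hM
  have herase : s.erase #s = range (#s - 1) := by
    have hsum : #s + ∑ y ∈ s.erase #s, y = ∑ y ∈ s, y := add_sum_erase s id hM
    have hsize := size_add_choose_two s
    have hsize' := size_add_choose_two (s.erase #s)
    rw [Nat.choose_two_eq_pred_add hk] at hsize
    rw [hcard] at hsize'
    rw [eq_range_of_size_eq_zero (s := s.erase #s) (by omega), hcard]
  have hrange : range (#s - 1) = (range #s).erase (#s - 1) := by
    ext x; simp only [mem_range, mem_erase]; omega
  exact ⟨#s, #s - 1, by omega, le_rfl, by rw [← hrange, ← herase, insert_erase hM]⟩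

def factorialProd (s : Finset ℕ) : ℕ := ∏ x ∈ s, x !

def vandermonde (s : Finset ℕ) : ℕ := ∏ a ∈ s, ∏ b ∈ s with b < a, (a - b)

/-- Frobenius' formula for the degree `χ_λ(1)`, read off a β-set of `λ`. -/
def degree (s : Finset ℕ) : ℕ := (size s)! * vandermonde s / factorialProd s

theorem factorialProd_ne_zero (s : Finset ℕ) : factorialProd s ≠ 0 :=
  prod_ne_zero_iff.mpr fun x _ => x.factorial_ne_zero

theorem vandermonde_ne_zero (s : Finset ℕ) : vandermonde s ≠ 0 :=
  prod_ne_zero_iff.mpr fun _ _ => prod_ne_zero_iff.mpr fun _ hb => by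
    rw [mem_filter] at hb; omega

theorem vandermonde_eq_prod_orderEmbOfFin (s : Finset ℕ) : vandermonde s
    = ∏ i : Fin #s, ∏ j ∈ Ioi i, (s.orderEmbOfFin rfl j - s.orderEmbOfFin rfl i) := by
  set v := s.orderEmbOfFin rfl
  have hs : univ.image v = s := image_orderEmbOfFin_univ s rfl
  calc vandermonde s = ∏ b ∈ s, ∏ a ∈ s with b < a, (a - b) :=
        prod_comm' fun a b => by simp only [mem_filter]; tauto
    _ = ∏ b ∈ univ.image v, ∏ a ∈ univ.image v with b < a, (a - b) := by rw [hs]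
    _ = _ := by
      rw [prod_image fun _ _ _ _ h => v.injective h]
      refine prod_congr rfl fun i _ => ?_
      rw [filter_image, prod_image fun _ _ _ _ h => v.injective h]
      exact prod_congr (by ext j; simp [v.lt_iff_lt]) fun _ _ => rfl

theorem prod_factorial_dvd_factorial_mul_prod_descFactorial {k : ℕ} (v : Fin k → ℕ)
    (σ : Equiv.Perm (Fin k)) :
    ∏ i, (v i)! ∣ (∑ i, v i - k.choose 2)! * ∏ i, (v (σ i)).descFactorial i := by
  by_cases h : ∀ i : Fin k, (i : ℕ) ≤ v (σ i)
  · have hsum : ∑ i, (v (σ i) - i) = ∑ i, v i - k.choose 2 := by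
      rw [sum_tsub_distrib _ fun i _ => h i, Equiv.sum_comp σ v,
        Fin.sum_univ_eq_sum_range (fun i => i) k, sum_range_id, Nat.choose_two_right]
    calc ∏ i, (v i)! = ∏ i, (v (σ i))! := (Equiv.prod_comp σ _).symm
      _ = (∏ i, (v (σ i) - i)!) * ∏ i, (v (σ i)).descFactorial i := by
        rw [← prod_mul_distrib]
        exact prod_congr rfl fun i _ => (Nat.factorial_mul_descFactorial (h i)).symm
      _ ∣ _ := mul_dvd_mul_right (hsum ▸ Nat.prod_factorial_dvd_factorial_sum _ _) _
  · obtain ⟨i, hi⟩ := not_forall.mp h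
    rw [prod_eq_zero (f := fun i : Fin k => (v (σ i)).descFactorial i) (mem_univ i)
      (Nat.descFactorial_eq_zero_iff_lt.mpr (not_le.mp hi)), mul_zero]
    exact dvd_zero _

/-- The Vandermonde determinant of the `x ∈ s` equals `det (descPochhammer j (x_i))`; expanding
the latter over permutations, every term is divisible by `factorialProd s / (size s)!`. -/
theorem factorialProd_dvd (s : Finset ℕ) : factorialProd s ∣ (size s)! * vandermonde s := by
  set v := s.orderEmbOfFin rfl
  have hs : univ.image v = s := image_orderEmbOfFin_univ s rfl
  have hF : factorialProd s = ∏ i, (v i)! := by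
    unfold factorialProd
    conv_lhs => rw [← hs]
    exact prod_image fun _ _ _ _ h => v.injective h
  have hn : size s = ∑ i, v i - (#s).choose 2 := by
    have : ∑ x ∈ s, x = ∑ i, v i := by
      conv_lhs => rw [← hs]
      exact sum_image fun _ _ _ _ h => v.injective h
    rw [size, this]
  set D := Matrix.of fun i j : Fin #s => (descPochhammer ℤ j).eval (v i : ℤ)
  have hP : (vandermonde s : ℤ) = D.det := by
    rw [← Matrix.det_eval_matrixOfPolynomials_eq_det_vandermonde _ _
      (fun j => descPochhammer_natDegree ℤ j) (fun j => monic_descPochhammer ℤ j),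
      Matrix.det_vandermonde, vandermonde_eq_prod_orderEmbOfFin]
    push_cast
    refine prod_congr rfl fun i _ => prod_congr rfl fun j hj => ?_
    rw [Nat.cast_sub (v.monotone (mem_Ioi.mp hj).le)]
  have hterm : ∀ σ : Equiv.Perm (Fin #s),
      ∏ i, D (σ i) i = ((∏ i, (v (σ i)).descFactorial i : ℕ) : ℤ) := fun σ => by
    push_cast
    exact prod_congr rfl fun i _ => descPochhammer_eval_eq_descFactorial ℤ _ _
  rw [hF, hn, ← Int.natCast_dvd_natCast, Nat.cast_mul, hP, Matrix.det_apply', mul_sum]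
  refine dvd_sum fun σ _ => ?_
  rw [mul_left_comm, hterm]
  have hdvd := prod_factorial_dvd_factorial_mul_prod_descFactorial v σ
  exact Dvd.dvd.mul_left (by exact_mod_cast hdvd) _

theorem degree_mul_factorialProd (s : Finset ℕ) :
    degree s * factorialProd s = (size s)! * vandermonde s :=
  Nat.div_mul_cancel (factorialProd_dvd s)

theorem degree_ne_zero (s : Finset ℕ) : degree s ≠ 0 := by
  intro h
  have := degree_mul_factorialProd s
  rw [h, zero_mul] at this
  exact mul_ne_zero (Nat.factorial_ne_zero _) (vandermonde_ne_zero s) this.symm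

theorem padicValNat_degree_add (p : ℕ) [Fact p.Prime] (s : Finset ℕ) :
    padicValNat p (degree s) + padicValNat p (factorialProd s)
      = padicValNat p (size s)! + padicValNat p (vandermonde s) := by
  rw [← padicValNat.mul (degree_ne_zero s) (factorialProd_ne_zero s), degree_mul_factorialProd,
    padicValNat.mul (Nat.factorial_ne_zero _) (vandermonde_ne_zero s)]

/-- For a β-set `s` of `λ`, `quot s 0` and `quot s 1` are β-sets of the 2-quotient `(λ₀, λ₁)`. -/
noncomputable def quot (s : Finset ℕ) (e : ℕ) : Finset ℕ :=
  s.preimage (fun b => 2 * b + e) fun _ _ _ _ h => by simp only at h; omega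

@[simp]
theorem mem_quot {s : Finset ℕ} {e b : ℕ} : b ∈ quot s e ↔ 2 * b + e ∈ s := mem_preimage

theorem mem_iff_div_two_mem_quot {s : Finset ℕ} {x : ℕ} : x ∈ s ↔ x / 2 ∈ quot s (x % 2) := by
  rw [mem_quot, Nat.div_add_mod]

theorem filter_mod_two_eq_image_quot (s : Finset ℕ) {e : ℕ} (he : e < 2) :
    {x ∈ s | x % 2 = e} = (quot s e).image (fun b => 2 * b + e) := by
  ext x
  simp only [mem_filter, mem_image, mem_quot]
  constructor
  · rintro ⟨hx, rfl⟩
    exact ⟨x / 2, by rwa [Nat.div_add_mod], Nat.div_add_mod x 2⟩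
  · rintro ⟨b, hb, rfl⟩
    exact ⟨hb, by omega⟩

theorem sum_eq_sum_quot {M : Type*} [AddCommMonoid M] (s : Finset ℕ) (f : ℕ → M) :
    ∑ x ∈ s, f x = ∑ b ∈ quot s 0, f (2 * b) + ∑ b ∈ quot s 1, f (2 * b + 1) := by
  rw [← sum_filter_add_sum_filter_not s (· % 2 = 0),
    filter_congr (p := fun x => ¬ x % 2 = 0) (q := (· % 2 = 1)) fun x _ => by omega,
    filter_mod_two_eq_image_quot s (by norm_num), filter_mod_two_eq_image_quot s (by norm_num),
    sum_image fun _ _ _ _ h => by omega, sum_image fun _ _ _ _ h => by omega]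
  simp only [add_zero]

theorem card_quot_add_card_quot (s : Finset ℕ) : #(quot s 0) + #(quot s 1) = #s := by
  simp only [card_eq_sum_ones]
  exact (sum_eq_sum_quot s fun _ => 1).symm

theorem sum_eq_sum_quot_add (s : Finset ℕ) :
    ∑ x ∈ s, x = 2 * ∑ b ∈ quot s 0, b + 2 * ∑ b ∈ quot s 1, b + #(quot s 1) := by
  rw [sum_eq_sum_quot s fun x => x, sum_add_distrib, mul_sum, mul_sum, card_eq_sum_ones]
  ring

theorem size_add_mul_card_quot (s : Finset ℕ) :
    size s + #(quot s 0) * #(quot s 1) = 2 * (size (quot s 0) + size (quot s 1))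
      + (#(quot s 0)).choose 2 + (#(quot s 1)).choose 2 + #(quot s 1) := by
  have h := size_add_choose_two s
  rw [← card_quot_add_card_quot, Nat.add_choose_two, sum_eq_sum_quot_add] at h
  have h0 := size_add_choose_two (quot s 0)
  have h1 := size_add_choose_two (quot s 1)
  omega

theorem two_mul_size_quot_le (s : Finset ℕ) :
    2 * (size (quot s 0) + size (quot s 1)) ≤ size s := by
  have := size_add_mul_card_quot s
  have := mul_le_choose_two_add_choose_two (#(quot s 0)) (#(quot s 1))
  omega

theorem padicValNat_factorialProd_quot (s : Finset ℕ) :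
    ν₂ (factorialProd s) = ∑ b ∈ quot s 0, b + ∑ b ∈ quot s 1, b
      + ν₂ (factorialProd (quot s 0)) + ν₂ (factorialProd (quot s 1)) := by
  simp only [factorialProd, padicValNat_finset_prod fun x _ => Nat.factorial_ne_zero x]
  rw [sum_eq_sum_quot s]
  simp only [padicValNat_factorial_mul_add _ (by norm_num : 1 < 2), padicValNat_factorial_mul,
    sum_add_distrib]
  ring

theorem vandermonde_image_two_mul_add (t : Finset ℕ) (e : ℕ) :
    vandermonde (t.image fun b => 2 * b + e) = 2 ^ (#t).choose 2 * vandermonde t := by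
  have hg : StrictMono fun b => 2 * b + e := fun a b h => by simp only; omega
  have hrow : ∀ a ∈ t, ∏ b ∈ t.image (fun b => 2 * b + e) with b < 2 * a + e, (2 * a + e - b)
      = 2 ^ #{b ∈ t | b < a} * ∏ b ∈ t with b < a, (a - b) := fun a _ => by
    rw [filter_image, prod_image hg.injective.injOn, pow_card_mul_prod]
    refine prod_congr (filter_congr fun b _ => hg.lt_iff_lt) fun b _ => ?_
    omega
  rw [vandermonde, prod_image hg.injective.injOn, prod_congr rfl hrow, prod_mul_distrib,
    prod_pow_eq_pow_sum, sum_card_filter_lt_eq_choose_two, vandermonde]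

theorem padicValNat_vandermonde (p : ℕ) [Fact p.Prime] (s : Finset ℕ) :
    padicValNat p (vandermonde s) = ∑ a ∈ s, ∑ b ∈ s with b < a, padicValNat p (a - b) := by
  rw [vandermonde, padicValNat_finset_prod fun _ _ => prod_ne_zero_iff.mpr fun _ hb => by
    rw [mem_filter] at hb; omega]
  refine sum_congr rfl fun a _ => padicValNat_finset_prod fun b hb => ?_
  rw [mem_filter] at hb; omega

theorem padicValNat_two_vandermonde_eq_filter (s : Finset ℕ) :
    ν₂ (vandermonde s)
      = ν₂ (vandermonde {x ∈ s | x % 2 = 0}) + ν₂ (vandermonde {x ∈ s | x % 2 = 1}) := by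
  have hpart : ∀ r, ∑ a ∈ s with a % 2 = r, ∑ b ∈ s with b < a, ν₂ (a - b)
      = ν₂ (vandermonde {x ∈ s | x % 2 = r}) := fun r => by
    rw [padicValNat_vandermonde]
    refine sum_congr rfl fun a ha => (sum_subset (fun b hb => ?_) fun b hb hb' => ?_).symm
    · simp only [mem_filter] at hb ⊢; exact ⟨hb.1.1, hb.2⟩
    · simp only [mem_filter] at ha hb hb'
      exact padicValNat.eq_zero_of_not_dvd fun h => hb' ⟨⟨hb.1, by omega⟩, hb.2⟩
  rw [padicValNat_vandermonde, ← sum_filter_add_sum_filter_not s (· % 2 = 0),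
    filter_congr (p := fun x => ¬ x % 2 = 0) (q := (· % 2 = 1)) fun x _ => by omega,
    hpart, hpart]

theorem padicValNat_vandermonde_quot (s : Finset ℕ) :
    ν₂ (vandermonde s) = (#(quot s 0)).choose 2 + (#(quot s 1)).choose 2
      + ν₂ (vandermonde (quot s 0)) + ν₂ (vandermonde (quot s 1)) := by
  rw [padicValNat_two_vandermonde_eq_filter, filter_mod_two_eq_image_quot s (by norm_num),
    filter_mod_two_eq_image_quot s (by norm_num), vandermonde_image_two_mul_add,
    vandermonde_image_two_mul_add, padicValNat.mul (by positivity) (vandermonde_ne_zero _),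
    padicValNat.mul (by positivity) (vandermonde_ne_zero _), padicValNat.prime_pow,
    padicValNat.prime_pow]
  ring

/-- `size s - 2 * (size (quot s 0) + size (quot s 1))` is the size of the 2-core. -/
theorem padicValNat_degree_quot (s : Finset ℕ) :
    ν₂ (degree s) = ν₂ (degree (quot s 0)) + ν₂ (degree (quot s 1))
      + ν₂ ((size (quot s 0) + size (quot s 1)).choose (size (quot s 0)))
      + ν₂ (size s - 2 * (size (quot s 0) + size (quot s 1)))!
      + ν₂ ((size s).choose (2 * (size (quot s 0) + size (quot s 1)))) := by
  obtain ⟨c, hc⟩ := Nat.exists_eq_add_of_le (two_mul_size_quot_le s)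
  have hfac : ν₂ (size s)! = size (quot s 0) + size (quot s 1) + ν₂ (size (quot s 0))!
      + ν₂ (size (quot s 1))! + ν₂ ((size (quot s 0) + size (quot s 1)).choose (size (quot s 0)))
      + ν₂ c ! + ν₂ ((size s).choose (2 * (size (quot s 0) + size (quot s 1)))) := by
    rw [hc, padicValNat_factorial_add, padicValNat_factorial_mul, padicValNat_factorial_add]
    ring
  have := padicValNat_degree_add 2 s
  have := padicValNat_degree_add 2 (quot s 0)
  have := padicValNat_degree_add 2 (quot s 1)
  have := padicValNat_factorialProd_quot s
  have := padicValNat_vandermonde_quot s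
  have := size_add_choose_two (quot s 0)
  have := size_add_choose_two (quot s 1)
  rw [show size s - 2 * (size (quot s 0) + size (quot s 1)) = c by omega]
  omega

theorem odd_degree_quot_of_odd_degree {s : Finset ℕ} (h : Odd (degree s)) :
    Odd (degree (quot s 0)) ∧ Odd (degree (quot s 1))
      ∧ Odd ((size (quot s 0) + size (quot s 1)).choose (size (quot s 0)))
      ∧ size s - 2 * (size (quot s 0) + size (quot s 1)) < 2 := by
  have hv := padicValNat_degree_quot s
  rw [(odd_iff_padicValNat_two_eq_zero (degree_ne_zero s)).mp h] at hv
  refine ⟨(odd_iff_padicValNat_two_eq_zero (degree_ne_zero _)).mpr (by omega),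
    (odd_iff_padicValNat_two_eq_zero (degree_ne_zero _)).mpr (by omega),
    (odd_iff_padicValNat_two_eq_zero (Nat.choose_pos (Nat.le_add_right _ _)).ne').mpr (by omega),
    not_le.mp fun h2 => ?_⟩
  have := one_le_padicValNat_of_dvd (Nat.factorial_ne_zero _) (Nat.dvd_factorial two_pos h2)
  omega

theorem IsHook.of_quot_zero {s : Finset ℕ}
    (hk : #(quot s 1) = #(quot s 0) ∨ #(quot s 0) = #(quot s 1) + 1)
    (h0 : IsHook (quot s 0)) (h1 : quot s 1 = range #(quot s 1)) : IsHook s := by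
  obtain ⟨M, g, hg, hM, hB⟩ := h0
  have hcard := card_quot_add_card_quot s
  refine ⟨2 * M, 2 * g, by omega, by omega, ?_⟩
  ext x
  rw [mem_iff_div_two_mem_quot]
  simp only [mem_insert, mem_erase, mem_range]
  rcases Nat.mod_two_eq_zero_or_one x with hx | hx <;> rw [hx]
  · rw [hB]; simp only [mem_insert, mem_erase, mem_range]; omega
  · rw [h1, mem_range]; omega

theorem IsHook.of_quot_one {s : Finset ℕ}
    (hk : #(quot s 1) = #(quot s 0) ∨ #(quot s 0) = #(quot s 1) + 1)
    (h0 : quot s 0 = range #(quot s 0)) (h1 : IsHook (quot s 1)) : IsHook s := by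
  obtain ⟨M, g, hg, hM, hB⟩ := h1
  have hcard := card_quot_add_card_quot s
  refine ⟨2 * M + 1, 2 * g + 1, by omega, by omega, ?_⟩
  ext x
  rw [mem_iff_div_two_mem_quot]
  simp only [mem_insert, mem_erase, mem_range]
  rcases Nat.mod_two_eq_zero_or_one x with hx | hx <;> rw [hx]
  · rw [h0, mem_range]; omega
  · rw [hB]; simp only [mem_insert, mem_erase, mem_range]; omega

theorem isHook_of_odd_degree :
    ∀ {m : ℕ} {s : Finset ℕ}, size s = 2 ^ m → Odd (degree s) → IsHook s
  | 0, _, hs, _ => isHook_of_size_eq_one hs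
  | m + 1, s, hs, hodd => by
    obtain ⟨hodd0, hodd1, hchoose, hcore⟩ := odd_degree_quot_of_odd_degree hodd
    have hle := two_mul_size_quot_le s
    rw [pow_succ] at hs
    have hN : size (quot s 0) + size (quot s 1) = 2 ^ m := by omega
    have hk : #(quot s 1) = #(quot s 0) ∨ #(quot s 0) = #(quot s 1) + 1 :=
      eq_or_eq_add_one_of_choose_two_add_choose_two (by have := size_add_mul_card_quot s; omega)
    rw [hN] at hchoose
    rcases eq_zero_or_eq_of_odd_choose_two_pow hchoose with h | h
    · exact IsHook.of_quot_one hk (eq_range_of_size_eq_zero h)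
        (isHook_of_odd_degree (m := m) (by omega) hodd1)
    · exact IsHook.of_quot_zero hk (isHook_of_odd_degree h hodd0)
        (eq_range_of_size_eq_zero (by omega))

end BetaSet

namespace YoungDiagram

open BetaSet

theorem eq_bot_of_card_eq_zero {μ : YoungDiagram} (h : μ.card = 0) : μ = ⊥ :=
  le_bot_iff.mp (cells_subset_iff.mp (by rw [card_eq_zero.mp h]; exact empty_subset _))

variable (μ : YoungDiagram)

def betaNum (i : ℕ) : ℕ := μ.rowLen i + (μ.colLen 0 - 1 - i)

def betaSet : Finset ℕ := (range (μ.colLen 0)).image μ.betaNum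

def colBetaNum (j : ℕ) : ℕ := j + μ.colLen 0 - μ.colLen j

theorem fst_lt_colLen_zero {c : ℕ × ℕ} (hc : c ∈ μ) : c.1 < μ.colLen 0 :=
  mem_iff_lt_colLen.mp (μ.up_left_mem le_rfl (Nat.zero_le _) hc)

theorem rowLen_pos {i : ℕ} (hi : i < μ.colLen 0) : 0 < μ.rowLen i :=
  mem_iff_lt_rowLen.mp (mem_iff_lt_colLen.mpr hi)

theorem prod_cells {M : Type*} [CommMonoid M] (f : ℕ × ℕ → M) :
    ∏ c ∈ μ.cells, f c = ∏ i ∈ range (μ.colLen 0), ∏ j ∈ range (μ.rowLen i), f (i, j) := by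
  rw [← prod_fiberwise_of_maps_to (g := Prod.fst) (t := range (μ.colLen 0))
    fun c hc => mem_range.mpr (μ.fst_lt_colLen_zero ((mem_cells c).mp hc))]
  refine prod_congr rfl fun i _ => ?_
  rw [show {c ∈ μ.cells | c.1 = i} = μ.row i from rfl, row_eq_prod, prod_product,
    prod_singleton]

theorem card_eq_sum_rowLen : μ.card = ∑ i ∈ range (μ.colLen 0), μ.rowLen i := by
  rw [YoungDiagram.card, card_eq_sum_card_fiberwise (f := Prod.fst) (t := range (μ.colLen 0))
    fun c hc => mem_range.mpr (μ.fst_lt_colLen_zero ((mem_cells c).mp hc))]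
  exact sum_congr rfl fun i _ => μ.rowLen_eq_card.symm

theorem betaNum_strictAntiOn : StrictAntiOn μ.betaNum (Set.Iio (μ.colLen 0)) := by
  intro i _ j hj hij
  have := μ.rowLen_anti i j hij.le
  simp only [Set.mem_Iio] at hj
  unfold betaNum
  omega

theorem betaNum_injOn : Set.InjOn μ.betaNum (range (μ.colLen 0)) := by
  rw [coe_range]; exact μ.betaNum_strictAntiOn.injOn

theorem betaNum_mem_betaSet {i : ℕ} (hi : i < μ.colLen 0) : μ.betaNum i ∈ μ.betaSet :=
  mem_image_of_mem _ (mem_range.mpr hi)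

theorem card_betaSet : #μ.betaSet = μ.colLen 0 := by
  rw [betaSet, card_image_of_injOn μ.betaNum_injOn, card_range]

theorem size_betaSet : size μ.betaSet = μ.card := by
  have hsum : ∑ x ∈ μ.betaSet, x = μ.card + (μ.colLen 0).choose 2 := by
    rw [betaSet, sum_image μ.betaNum_injOn]
    simp only [betaNum]
    rw [sum_add_distrib, card_eq_sum_rowLen, sum_range_reflect (fun i => i), sum_range_id,
      Nat.choose_two_right]
  have := size_add_choose_two μ.betaSet
  rw [card_betaSet] at this
  omega

theorem factorialProd_betaSet :
    factorialProd μ.betaSet = ∏ i ∈ range (μ.colLen 0), (μ.betaNum i)! := by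
  rw [factorialProd, betaSet, prod_image μ.betaNum_injOn]

theorem vandermonde_betaSet : vandermonde μ.betaSet
    = ∏ i ∈ range (μ.colLen 0), ∏ j ∈ Ioo i (μ.colLen 0), (μ.betaNum i - μ.betaNum j) := by
  rw [vandermonde, betaSet, prod_image μ.betaNum_injOn]
  refine prod_congr rfl fun i hi => ?_
  rw [filter_image, prod_image (μ.betaNum_injOn.mono (filter_subset _ _))]
  refine prod_congr ?_ fun _ _ => rfl
  ext j
  simp only [mem_filter, mem_range, mem_Ioo] at hi ⊢
  constructor
  · rintro ⟨hj, hlt⟩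
    exact ⟨(μ.betaNum_strictAntiOn.lt_iff_gt hj hi).mp hlt, hj⟩
  · rintro ⟨hij, hj⟩
    exact ⟨hj, μ.betaNum_strictAntiOn hi hj hij⟩

theorem hookLength_eq {i j : ℕ} (hj : j < μ.rowLen i) :
    hookLength μ i j = μ.betaNum i - μ.colBetaNum j := by
  have hi := mem_iff_lt_colLen.mp (mem_iff_lt_rowLen.mpr hj)
  have := μ.colLen_anti 0 j (Nat.zero_le j)
  unfold hookLength betaNum colBetaNum
  omega

theorem colBetaNum_strictMono : StrictMono μ.colBetaNum := by
  intro j j' hjj'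
  have := μ.colLen_anti j j' hjj'.le
  have := μ.colLen_anti 0 j (Nat.zero_le j)
  unfold colBetaNum
  omega

theorem colBetaNum_ne_betaNum (j : ℕ) {i : ℕ} (hi : i < μ.colLen 0) :
    μ.colBetaNum j ≠ μ.betaNum i := by
  have := μ.colLen_anti 0 j (Nat.zero_le j)
  have hcell : j < μ.rowLen i ↔ i < μ.colLen j := mem_iff_lt_rowLen.symm.trans mem_iff_lt_colLen
  unfold colBetaNum betaNum
  omega

theorem colBetaNum_lt_betaNum {i j : ℕ} (hj : j < μ.rowLen i) : μ.colBetaNum j < μ.betaNum i := by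
  have := μ.colLen_anti 0 j (Nat.zero_le j)
  have hij := mem_iff_lt_colLen.mp (mem_iff_lt_rowLen.mpr hj)
  unfold colBetaNum betaNum
  omega

theorem disjoint_image_colBetaNum_image_betaNum (i : ℕ) :
    Disjoint ((range (μ.rowLen i)).image μ.colBetaNum)
      ((Ioo i (μ.colLen 0)).image μ.betaNum) := by
  simp only [disjoint_left, mem_image, mem_range, mem_Ioo, not_exists, not_and]
  rintro _ ⟨j, -, rfl⟩ i' ⟨-, hi'⟩
  exact (μ.colBetaNum_ne_betaNum j hi').symm

theorem image_colBetaNum_union_image_betaNum {i : ℕ} (hi : i < μ.colLen 0) :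
    (range (μ.rowLen i)).image μ.colBetaNum ∪ (Ioo i (μ.colLen 0)).image μ.betaNum
      = range (μ.betaNum i) := by
  have hinj : Set.InjOn μ.betaNum (Ioo i (μ.colLen 0)) :=
    μ.betaNum_injOn.mono fun j hj => mem_range.mpr (mem_Ioo.mp hj).2
  refine eq_of_subset_of_card_le (fun x hx => ?_) ?_
  · simp only [mem_union, mem_image, mem_range, mem_Ioo] at hx
    rcases hx with ⟨j, hj, rfl⟩ | ⟨j, ⟨hij, hj⟩, rfl⟩
    · exact mem_range.mpr (μ.colBetaNum_lt_betaNum hj)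
    · exact mem_range.mpr (μ.betaNum_strictAntiOn hi hj hij)
  · rw [card_union_of_disjoint (μ.disjoint_image_colBetaNum_image_betaNum i),
      card_image_of_injOn μ.colBetaNum_strictMono.injective.injOn, card_image_of_injOn hinj,
      card_range, card_range, Nat.card_Ioo, betaNum]
    omega

theorem hookLength_row_prod {i : ℕ} (hi : i < μ.colLen 0) :
    (∏ j ∈ range (μ.rowLen i), hookLength μ i j)
      * ∏ j ∈ Ioo i (μ.colLen 0), (μ.betaNum i - μ.betaNum j) = (μ.betaNum i)! := by
  rw [← Nat.descFactorial_self, Nat.descFactorial_eq_prod_range,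
    ← μ.image_colBetaNum_union_image_betaNum hi,
    prod_union (μ.disjoint_image_colBetaNum_image_betaNum i),
    prod_image μ.colBetaNum_strictMono.injective.injOn,
    prod_image (μ.betaNum_injOn.mono fun j hj => mem_range.mpr (mem_Ioo.mp hj).2)]
  congr 1
  exact prod_congr rfl fun j hj => μ.hookLength_eq (mem_range.mp hj)

theorem hookLength_prod_mul_vandermonde :
    (∏ c ∈ μ.cells, hookLength μ c.1 c.2) * vandermonde μ.betaSet = factorialProd μ.betaSet := by
  rw [prod_cells, vandermonde_betaSet, factorialProd_betaSet, ← prod_mul_distrib]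
  exact prod_congr rfl fun i hi => μ.hookLength_row_prod (mem_range.mp hi)

theorem charDegree_eq_degree : charDegree μ = degree μ.betaSet := by
  rw [charDegree, degree, size_betaSet, ← hookLength_prod_mul_vandermonde,
    Nat.mul_div_mul_right _ _ (Nat.pos_of_ne_zero (vandermonde_ne_zero _))]

theorem rowLen_one_le_one_of_isHook (h : IsHook μ.betaSet) : μ.rowLen 1 ≤ 1 := by
  by_contra! h2
  have h1 : 1 < μ.colLen 0 := mem_iff_lt_colLen.mp (mem_iff_lt_rowLen.mpr (by omega))
  have hlt : μ.betaNum 1 < μ.betaNum 0 :=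
    μ.betaNum_strictAntiOn (by simp only [Set.mem_Iio]; omega) h1 zero_lt_one
  have hk : #μ.betaSet ≤ μ.betaNum 1 := by rw [card_betaSet, betaNum]; omega
  have := h.eq_of_card_le (μ.betaNum_mem_betaSet (i := 0) (by omega)) (μ.betaNum_mem_betaSet h1)
    (by omega) hk
  omega

theorem exists_rowLens_eq_of_isHook (h : IsHook μ.betaSet) (hμ : μ.card ≠ 0) :
    ∃ r, 1 ≤ r ∧ r ≤ μ.card ∧ μ.rowLens = r :: List.replicate (μ.card - r) 1 := by
  obtain ⟨n, hn⟩ : ∃ n, μ.colLen 0 = n + 1 := Nat.exists_eq_add_one.mpr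
    (Nat.pos_of_ne_zero fun h0 => hμ (by simp [card_eq_sum_rowLen, h0]))
  have hrow : ∀ i ∈ range n, μ.rowLen (i + 1) = 1 := fun i hi =>
    le_antisymm ((μ.rowLen_anti 1 (i + 1) (by omega)).trans (μ.rowLen_one_le_one_of_isHook h))
      (μ.rowLen_pos (by rw [mem_range] at hi; omega))
  have hcard : μ.card = μ.rowLen 0 + n := by
    rw [card_eq_sum_rowLen, hn, sum_range_succ', sum_congr rfl hrow]
    simp [add_comm]
  refine ⟨μ.rowLen 0, μ.rowLen_pos (by omega), by omega, ?_⟩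
  rw [rowLens, hn, List.range_succ_eq_map, List.map_cons, List.map_map, hcard,
    Nat.add_sub_cancel_left]
  congr 1
  refine List.eq_replicate_iff.mpr ⟨by simp, fun b hb => ?_⟩
  obtain ⟨i, hi, rfl⟩ := List.mem_map.mp hb
  exact hrow i (mem_range.mpr (List.mem_range.mp hi))

end YoungDiagram

/-- Let `w = 2^m` be a power of two and `(λ₀, λ₁)` a pair of partitions with
`|λ₀| + |λ₁| = w`.  If `C(w,|λ₀|)·χ_{λ₀}(1)·χ_{λ₁}(1)` is odd and `|λ₀| > |λ₁|`,
then `λ₁ = ()` and `λ₀` is a hook partition `(r, 1^{w−r})` with `1 ≤ r ≤ w`. -/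
theorem stmt15 (m w : ℕ) (hw : w = 2 ^ m)
    (μ₀ μ₁ : YoungDiagram) (hsum : μ₀.card + μ₁.card = w)
    (hodd : Odd (Nat.choose w μ₀.card * charDegree μ₀ * charDegree μ₁))
    (hgt : μ₀.card > μ₁.card) :
    μ₁ = ⊥ ∧ ∃ r, 1 ≤ r ∧ r ≤ w ∧ μ₀.rowLens = r :: List.replicate (w - r) 1 := by
  rw [Nat.odd_mul, Nat.odd_mul] at hodd
  obtain ⟨⟨hchoose, hdeg⟩, -⟩ := hodd
  have hcard : μ₀.card = w := by
    rw [hw] at hchoose hsum ⊢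
    rcases eq_zero_or_eq_of_odd_choose_two_pow hchoose with h | h <;> omega
  refine ⟨YoungDiagram.eq_bot_of_card_eq_zero (by omega), hcard ▸ ?_⟩
  refine μ₀.exists_rowLens_eq_of_isHook (BetaSet.isHook_of_odd_degree (m := m) ?_ ?_) (by omega)
  · rw [YoungDiagram.size_betaSet, hcard, hw]
  · rwa [← YoungDiagram.charDegree_eq_degree]
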